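/- arXiv:2212.10661 — 3 statements merged into one kernel-verified Lean document; each statement's English description precedes it below -/
import Mathlib

section
/- Let X be a time-inhomogeneous Markov jump process with transition sub-probability matrices P̄_i(t,s) within macrostate i (continuous in both arguments and differentiable with ∂_s P̄(t,s)|_{s=t} = M_{ii}(t)). Then the transition intensities of the conditioned process W_ℓ (the micro process within a macro sojourn conditioned on the macro jump data S_n) are μ̃_{ij}(t | S_n) = μ_{(Y,i)(Y,j)}(t) · [e_j' P̄_Y(t, T_ℓ) α_{ℓ+1}(S_n)] / [e_i' P̄_Y(t, T_ℓ) α_{ℓ+1}(S_n)], obtained as the limit as h ↓ 0 of p̃_{ij}(t, t+h | S_n)/h with p̃ the conditional transition probabilities p̃_{ij}(t,s|S_n) = e_i' P̄_Y(t,s) e_j e_j' P̄_Y(s,T_ℓ) α_{ℓ+1}(S_n) / (e_i' P̄_Y(t,T_ℓ) α_{ℓ+1}(S_n)). -/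
open Matrix Filter

theorem conditioned_process_intensities_general (d : ℕ)
    (P : ℝ → ℝ → Matrix (Fin d) (Fin d) ℝ)
    (v : Fin d → ℝ) (t T : ℝ) (i j : Fin d)
    (μ : ℝ)
    (hlim : Tendsto (fun h : ℝ => P t (t + h) i j / h)
      (nhdsWithin 0 (Set.Ioi 0)) (nhds μ))
    (hcont : Tendsto (fun h : ℝ => (P (t + h) T).mulVec v j)
      (nhdsWithin 0 (Set.Ioi 0)) (nhds ((P t T).mulVec v j))) :
    Tendsto
      (fun h : ℝ =>
        P t (t + h) i j * (P (t + h) T).mulVec v j / (P t T).mulVec v i / h)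
      (nhdsWithin 0 (Set.Ioi 0))
      (nhds (μ * ((P t T).mulVec v j / (P t T).mulVec v i))) := by
  convert (hlim.mul hcont).div_const ((P t T).mulVec v i) using 1
  · funext h
    ring
  · rw [mul_div_assoc]

/-- The transition intensities of the conditioned within-sojourn process are obtained as
`μ̃_{ij}(t) = lim_{h↓0} p̃_{ij}(t, t+h)/h
           = μ_{(Y,i)(Y,j)}(t) · e_j' P̄(t,T) v / (e_i' P̄(t,T) v)`. -/
theorem conditioned_process_intensities (d : ℕ)
    (P : ℝ → ℝ → Matrix (Fin d) (Fin d) ℝ)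
    (v : Fin d → ℝ) (t T : ℝ) (i j : Fin d) (hij : i ≠ j)
    (μ : ℝ)
    (hlim : Tendsto (fun h : ℝ => P t (t + h) i j / h)
      (nhdsWithin 0 (Set.Ioi 0)) (nhds μ))
    (hcont : Tendsto (fun h : ℝ => (P (t + h) T).mulVec v j)
      (nhdsWithin 0 (Set.Ioi 0)) (nhds ((P t T).mulVec v j)))
    (hden : 0 < (P t T).mulVec v i) :
    Tendsto
      (fun h : ℝ =>
        P t (t + h) i j * (P (t + h) T).mulVec v j / (P t T).mulVec v i / h)
      (nhdsWithin 0 (Set.Ioi 0))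
      (nhds (μ * ((P t T).mulVec v j / (P t T).mulVec v i))) :=
  conditioned_process_intensities_general d P v t T i j μ hlim hcont
end

section
/- Under the reset property M_{ij}(t) = β_{ij}(t) π_j(t) (with π_j(t)1 = 1), the defective density row vector α(s_n) = π_1(0) ∏_{ℓ=0}^{n-1} P̄_{y_ℓ}(t_ℓ, t_{ℓ+1}) M_{y_ℓ y_{ℓ+1}}(t_{ℓ+1}) factorizes as α(s_n) = [∏_{ℓ=0}^{n-1} π_{y_ℓ}(t_ℓ) P̄_{y_ℓ}(t_ℓ, t_{ℓ+1}) β_{y_ℓ y_{ℓ+1}}(t_{ℓ+1})] · π_{y_n}(t_n); in particular the total mass α(s_n) 1_{d_{y_n}} equals the product over ℓ of the scalars π_{y_ℓ}(t_ℓ) P̄_{y_ℓ}(t_ℓ, t_{ℓ+1}) β_{y_ℓ y_{ℓ+1}}(t_{ℓ+1}), so that the sojourn times are conditionally independent across sojourns given the macro states and jump times. -/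
/-!
Each reset matrix `M_{ij} = β_{ij} π_j` has rank one, so multiplying any row vector `v` by
`P̄_i M_{ij}` forgets `v` up to the scalar `v P̄_i β_{ij}` and returns a multiple of `π_j`.
Starting from `α(s_0) = π_{y_0}(t_0)`, induction on `n` shows that `α(s_n)` is `π_{y_n}(t_n)`
scaled by the product of these scalars; summing, `π_{y_n}(t_n) 1 = 1` gives the total mass.
-/

open Matrix

/-- The defective density row vector `α(s_n)` of the macro jump data. -/
noncomputable def alphaVec (J : ℕ) (d : Fin J → ℕ) (y : ℕ → Fin J) (t : ℕ → ℝ)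
    (Pbar : ∀ i : Fin J, ℝ → ℝ → Matrix (Fin (d i)) (Fin (d i)) ℝ)
    (M : ∀ i j : Fin J, ℝ → Matrix (Fin (d i)) (Fin (d j)) ℝ)
    (π1 : Fin (d (y 0)) → ℝ) : (n : ℕ) → Fin (d (y n)) → ℝ
  | 0 => π1
  | n + 1 =>
      (alphaVec J d y t Pbar M π1 n) ᵥ*
        (Pbar (y n) (t n) (t (n + 1)) * M (y n) (y (n + 1)) (t (n + 1)))

theorem Matrix.vecMul_mul_vecMulVec {R l m n : Type*} [CommSemiring R] [Fintype l] [Fintype m]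
    (v : l → R) (P : Matrix l m R) (β : m → R) (π : n → R) :
    v ᵥ* (P * vecMulVec β π) = ((v ᵥ* P) ⬝ᵥ β) • π := by
  rw [← vecMul_vecMul, vecMul_vecMulVec]

theorem alphaVec_eq_prod_smul (J : ℕ) (d : Fin J → ℕ) (y : ℕ → Fin J) (t : ℕ → ℝ)
    (Pbar : ∀ i : Fin J, ℝ → ℝ → Matrix (Fin (d i)) (Fin (d i)) ℝ)
    (M : ∀ i j : Fin J, ℝ → Matrix (Fin (d i)) (Fin (d j)) ℝ)
    (β : ∀ i : Fin J, Fin J → ℝ → Fin (d i) → ℝ) (πv : ∀ j : Fin J, ℝ → Fin (d j) → ℝ)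
    (hreset : ∀ i j, i ≠ j → ∀ x, M i j x = vecMulVec (β i j x) (πv j x))
    (hjump : ∀ ℓ : ℕ, y ℓ ≠ y (ℓ + 1)) (n : ℕ) :
    alphaVec J d y t Pbar M (πv (y 0) (t 0)) n =
      (∏ ℓ ∈ Finset.range n,
        ((πv (y ℓ) (t ℓ) ᵥ* Pbar (y ℓ) (t ℓ) (t (ℓ + 1))) ⬝ᵥ β (y ℓ) (y (ℓ + 1)) (t (ℓ + 1)))) •
        πv (y n) (t n) := by
  induction n with
  | zero => simp [alphaVec]
  | succ n ih =>
    rw [alphaVec, ih, hreset _ _ (hjump n), vecMul_mul_vecMulVec, smul_vecMul, smul_dotProduct,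
      smul_eq_mul, Finset.prod_range_succ]

theorem alpha_factorizes_reset_general (J : ℕ) (d : Fin J → ℕ) (y : ℕ → Fin J) (t : ℕ → ℝ)
    (Pbar : ∀ i : Fin J, ℝ → ℝ → Matrix (Fin (d i)) (Fin (d i)) ℝ)
    (M : ∀ i j : Fin J, ℝ → Matrix (Fin (d i)) (Fin (d j)) ℝ)
    (β : ∀ i j : Fin J, ℝ → Fin (d i) → ℝ)
    (πv : ∀ j : Fin J, ℝ → Fin (d j) → ℝ)
    (hπ1 : ∀ j x, ∑ b, πv j x b = 1)
    (hreset : ∀ i j, i ≠ j → ∀ x, M i j x = vecMulVec (β i j x) (πv j x))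
    (hjump : ∀ ℓ : ℕ, y ℓ ≠ y (ℓ + 1))
    (π1 : Fin (d (y 0)) → ℝ) (hinit : π1 = πv (y 0) (t 0)) (n : ℕ) :
    (∀ b, alphaVec J d y t Pbar M π1 n b =
        (∏ ℓ ∈ Finset.range n,
          ((πv (y ℓ) (t ℓ) ᵥ* Pbar (y ℓ) (t ℓ) (t (ℓ + 1))) ⬝ᵥ
            β (y ℓ) (y (ℓ + 1)) (t (ℓ + 1)))) * πv (y n) (t n) b) ∧
      ∑ b, alphaVec J d y t Pbar M π1 n b =
        ∏ ℓ ∈ Finset.range n,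
          ((πv (y ℓ) (t ℓ) ᵥ* Pbar (y ℓ) (t ℓ) (t (ℓ + 1))) ⬝ᵥ
            β (y ℓ) (y (ℓ + 1)) (t (ℓ + 1))) := by
  subst hinit
  have hα := alphaVec_eq_prod_smul J d y t Pbar M β πv hreset hjump n
  refine ⟨fun b => by rw [hα, Pi.smul_apply, smul_eq_mul], ?_⟩
  simp only [hα, Pi.smul_apply, smul_eq_mul, ← Finset.mul_sum, hπ1, mul_one]

/-- Under the reset property `M_{ij}(t) = β_{ij}(t) π_j(t)`, the defective density
factorizes as `α(s_n) = (∏_ℓ π_{y_ℓ}(t_ℓ) P̄_{y_ℓ}(t_ℓ,t_{ℓ+1}) β_{y_ℓ y_{ℓ+1}}(t_{ℓ+1})) · π_{y_n}(t_n)`,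
and in particular the total mass `α(s_n)1` is the product of these scalars. -/
theorem alpha_factorizes_reset (J : ℕ) (d : Fin J → ℕ) (y : ℕ → Fin J) (t : ℕ → ℝ)
    (Pbar : ∀ i : Fin J, ℝ → ℝ → Matrix (Fin (d i)) (Fin (d i)) ℝ)
    (M : ∀ i j : Fin J, ℝ → Matrix (Fin (d i)) (Fin (d j)) ℝ)
    (β : ∀ i j : Fin J, ℝ → Fin (d i) → ℝ)
    (πv : ∀ j : Fin J, ℝ → Fin (d j) → ℝ)
    (hβ : ∀ i j x a, 0 ≤ β i j x a)
    (hπ0 : ∀ j x b, 0 ≤ πv j x b)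
    (hπ1 : ∀ j x, ∑ b, πv j x b = 1)
    (hreset : ∀ i j, i ≠ j → ∀ x, M i j x = vecMulVec (β i j x) (πv j x))
    (hjump : ∀ ℓ : ℕ, y ℓ ≠ y (ℓ + 1))
    (π1 : Fin (d (y 0)) → ℝ) (hinit : π1 = πv (y 0) (t 0)) (n : ℕ) :
    (∀ b, alphaVec J d y t Pbar M π1 n b =
        (∏ ℓ ∈ Finset.range n,
          ((πv (y ℓ) (t ℓ) ᵥ* Pbar (y ℓ) (t ℓ) (t (ℓ + 1))) ⬝ᵥ
            β (y ℓ) (y (ℓ + 1)) (t (ℓ + 1)))) * πv (y n) (t n) b) ∧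
      ∑ b, alphaVec J d y t Pbar M π1 n b =
        ∏ ℓ ∈ Finset.range n,
          ((πv (y ℓ) (t ℓ) ᵥ* Pbar (y ℓ) (t ℓ) (t (ℓ + 1))) ⬝ᵥ
            β (y ℓ) (y (ℓ + 1)) (t (ℓ + 1))) :=
  alpha_factorizes_reset_general J d y t Pbar M β πv hπ1 hreset hjump π1 hinit n
end

section
/- Let P̄(s,t) = ∏_s^t (I + M(x)dx) be the product integral of a sub-intensity matrix function M (real square matrices with nonnegative off-diagonal entries and nonpositive row sums, M integrable). Then P̄(s,t) is entrywise nonnegative and sub-stochastic: every entry of P̄(s,t) lies in [0,1] and each row sum of P̄(s,t) is at most 1, for all s ≤ t. -/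
open Set Filter Topology

/-- If `f` is the (finite, nonempty) pointwise max of differentiable functions and at every
point of `[a,b)` every argmax component has nonpositive derivative, then `f x ≤ f a` on `[a,b]`. -/
lemma sup'_le_of_argmax_deriv_nonpos {ι : Type*} [Fintype ι] [Nonempty ι]
    {a b : ℝ} (g g' : ι → ℝ → ℝ)
    (hg : ∀ i t, HasDerivAt (g i) (g' i t) t)
    (hle : ∀ x ∈ Ico a b, ∀ i, (∀ j, g j x ≤ g i x) → g' i x ≤ 0) :
    ∀ x ∈ Icc a b, (Finset.univ.sup' Finset.univ_nonempty fun i => g i x)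
      ≤ Finset.univ.sup' Finset.univ_nonempty fun i => g i a := by
  set f : ℝ → ℝ := fun t => Finset.univ.sup' Finset.univ_nonempty fun i => g i t with hfdef
  have hcont : ∀ i, Continuous (g i) := fun i =>
    (fun t => (hg i t).differentiableAt) |> fun h => Differentiable.continuous h
  have hfc : ContinuousOn f (Icc a b) :=
    ContinuousOn.finset_sup'_apply _ fun i _ => (hcont i).continuousOn
  have := image_le_of_liminf_slope_right_le_deriv_boundary (B := fun _ => f a)
    (B' := fun _ => 0) hfc le_rfl continuousOn_const
    (fun x _ => hasDerivWithinAt_const x _ (f a)) ?_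
  · exact this
  intro x hx r hr
  apply Filter.Eventually.frequently
  have key : ∀ i : ι, ∀ᶠ z in 𝓝[>] x, g i z < f x + r * (z - x) := by
    intro i
    have hi : g i x ≤ f x := Finset.le_sup' (fun i => g i x) (Finset.mem_univ i)
    rcases lt_or_eq_of_le hi with h | h
    · have h1 : ∀ᶠ z in 𝓝 x, g i z < f x :=
        ((hcont i).tendsto x).eventually_lt_const h
      filter_upwards [nhdsWithin_le_nhds h1, self_mem_nhdsWithin] with z hz (hz2 : x < z)
      have hr' : (0:ℝ) < r := hr
      nlinarith [mul_pos hr' (by linarith : (0:ℝ) < z - x)]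
    · have hargmax : ∀ j, g j x ≤ g i x := by
        intro j; rw [h]; exact Finset.le_sup' (fun i => g i x) (Finset.mem_univ j)
      have hd : g' i x < r := lt_of_le_of_lt (hle x hx i hargmax) hr
      have h2 : Tendsto (slope (g i) x) (𝓝[≠] x) (𝓝 (g' i x)) :=
        hasDerivAt_iff_tendsto_slope.1 (hg i x)
      have h3 : ∀ᶠ z in 𝓝[≠] x, slope (g i) x z < r := h2.eventually_lt_const hd
      have h4 : ∀ᶠ z in 𝓝[>] x, slope (g i) x z < r :=
        nhdsWithin_mono x (fun z hz => ne_of_gt hz) h3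
      filter_upwards [h4, self_mem_nhdsWithin] with z hz (hz2 : x < z)
      rw [slope_def_field] at hz
      have hz3 : (0:ℝ) < z - x := by linarith
      have := (div_lt_iff₀ hz3).1 hz
      linarith
  have hall : ∀ᶠ z in 𝓝[>] x, ∀ i, g i z < f x + r * (z - x) := eventually_all.2 key
  filter_upwards [hall, self_mem_nhdsWithin] with z hz (hz2 : x < z)
  obtain ⟨i0, -, hi0⟩ := Finset.exists_mem_eq_sup' Finset.univ_nonempty fun i => g i z
  have : f z < f x + r * (z - x) := by rw [hfdef]; simp only; rw [hi0]; exact hz i0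
  rw [slope_def_field]
  rw [div_lt_iff₀ (by linarith : (0:ℝ) < z - x)]
  · linarith

/-- The product integral `P̄(s,t)` of a sub-intensity matrix function `M` (nonnegative
off-diagonal entries, nonpositive row sums), i.e. the solution of the forward equation
`∂_t P̄(s,t) = P̄(s,t) M(t)`, `P̄(s,s) = I`, is entrywise nonnegative and sub-stochastic:
all entries lie in `[0,1]` and each row sum is at most `1`, for all `s ≤ t`. -/
theorem product_integral_substochastic (d : ℕ)
    (M : ℝ → Matrix (Fin d) (Fin d) ℝ)
    (hoff : ∀ x (i j : Fin d), i ≠ j → 0 ≤ M x i j)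
    (hrow : ∀ x (i : Fin d), ∑ j, M x i j ≤ 0)
    (P : ℝ → ℝ → Matrix (Fin d) (Fin d) ℝ)
    (hP0 : ∀ a, P a a = 1)
    (hPderiv : ∀ a t (i j : Fin d),
      HasDerivAt (fun u => P a u i j) ((P a t * M t) i j) t) :
    ∀ s t : ℝ, s ≤ t →
      (∀ i j, 0 ≤ P s t i j ∧ P s t i j ≤ 1) ∧ ∀ i, ∑ j, P s t i j ≤ 1 := by
  intro s t hst
  -- Step 1: entrywise nonnegativity of `P s u` for all `u ≥ s`.
  have nonneg : ∀ u, s ≤ u → ∀ (i j : Fin d), 0 ≤ P s u i j := by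
    intro u hu i j
    set g : Finset (Fin d) → ℝ → ℝ := fun S v => -(∑ k ∈ S, P s v i k) with hgdef
    set g' : Finset (Fin d) → ℝ → ℝ := fun S v => -(∑ k ∈ S, (P s v * M v) i k) with hg'def
    have hgd : ∀ S v, HasDerivAt (g S) (g' S v) v := fun S v =>
      (HasDerivAt.fun_sum fun k _ => hPderiv s v i k).neg
    have hle : ∀ x ∈ Set.Ico s u, ∀ S : Finset (Fin d),
        (∀ T, g T x ≤ g S x) → g' S x ≤ 0 := by
      intro x _ S hS
      have hin : ∀ k ∈ S, P s x i k ≤ 0 := by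
        intro k hk
        have h1 := hS (S.erase k)
        have h2 : ∑ m ∈ S.erase k, P s x i m + P s x i k = ∑ m ∈ S, P s x i m :=
          Finset.sum_erase_add S _ hk
        simp only [hgdef, neg_le_neg_iff] at h1
        linarith
      have hout : ∀ k, k ∉ S → 0 ≤ P s x i k := by
        intro k hk
        have h1 := hS (insert k S)
        have h2 : ∑ m ∈ insert k S, P s x i m = P s x i k + ∑ m ∈ S, P s x i m :=
          Finset.sum_insert hk
        simp only [hgdef, neg_le_neg_iff] at h1
        linarith
      have key : (0:ℝ) ≤ ∑ k ∈ S, (P s x * M x) i k := by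
        have expand : ∑ k ∈ S, (P s x * M x) i k
            = ∑ m, P s x i m * (∑ k ∈ S, M x m k) := by
          simp only [Matrix.mul_apply]
          rw [Finset.sum_comm]
          simp [Finset.mul_sum]
        rw [expand]
        apply Finset.sum_nonneg
        intro m _
        by_cases hm : m ∈ S
        · have hcol : ∑ k ∈ S, M x m k ≤ 0 := by
            have h3 : ∑ k ∈ S, M x m k ≤ ∑ k, M x m k := by
              apply Finset.sum_le_sum_of_subset_of_nonneg (Finset.subset_univ S)
              intro k _ hkS
              exact hoff x m k (fun h => hkS (h ▸ hm))
            exact h3.trans (hrow x m)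
          nlinarith [hin m hm]
        · apply mul_nonneg (hout m hm)
          apply Finset.sum_nonneg
          intro k hk
          exact hoff x m k (fun h => hm (h ▸ hk))
      simpa [hg'def, neg_nonpos] using key
    have hf := sup'_le_of_argmax_deriv_nonpos (a := s) (b := u) g g' hgd hle u
      ⟨hu, le_refl u⟩
    have hfs : (Finset.univ.sup' Finset.univ_nonempty fun S => g S s) ≤ 0 := by
      apply Finset.sup'_le
      intro S _
      simp only [hgdef, hP0, neg_nonpos]
      apply Finset.sum_nonneg
      intro k _
      rw [Matrix.one_apply]
      split <;> norm_num
    have hsing : g {j} u ≤ Finset.univ.sup' Finset.univ_nonempty fun S => g S u :=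
      Finset.le_sup' (fun S => g S u) (Finset.mem_univ ({j} : Finset (Fin d)))
    have : g {j} u ≤ 0 := le_trans hsing (le_trans hf hfs)
    simpa [hgdef] using this
  -- Step 2: row sums are nonincreasing on `[s, t]`.
  have rowsum : ∀ i : Fin d, ∑ j, P s t i j ≤ 1 := by
    intro i
    have hr : ∀ v, HasDerivAt (fun u => ∑ j, P s u i j) (∑ j, (P s v * M v) i j) v :=
      fun v => HasDerivAt.fun_sum fun j _ => hPderiv s v i j
    have hanti : AntitoneOn (fun u => ∑ j, P s u i j) (Set.Icc s t) := by
      apply antitoneOn_of_deriv_nonpos (convex_Icc s t)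
      · exact fun x _ => ((hr x).continuousAt).continuousWithinAt
      · exact fun x _ => ((hr x).differentiableAt).differentiableWithinAt
      · intro x hx
        rw [interior_Icc] at hx
        rw [(hr x).deriv]
        have expand : ∑ j, (P s x * M x) i j = ∑ m, P s x i m * (∑ j, M x m j) := by
          simp only [Matrix.mul_apply]
          rw [Finset.sum_comm]
          simp [Finset.mul_sum]
        rw [expand]
        apply Finset.sum_nonpos
        intro m _
        exact mul_nonpos_of_nonneg_of_nonpos (nonneg x (le_of_lt hx.1) i m) (hrow x m)
    have h1 : ∑ j, P s t i j ≤ ∑ j, P s s i j :=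
      hanti (Set.left_mem_Icc.2 hst) (Set.right_mem_Icc.2 hst) hst
    have h2 : ∑ j, P s s i j = 1 := by
      simp [hP0, Matrix.one_apply]
    linarith
  refine ⟨fun i j => ⟨nonneg t hst i j, ?_⟩, rowsum⟩
  have h3 : P s t i j ≤ ∑ k, P s t i k :=
    Finset.single_le_sum (fun k _ => nonneg t hst i k) (Finset.mem_univ j)
  exact h3.trans (rowsum i)
end
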